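/- For all integers N ≥ 1 and n ≥ 1, B_{N,n} = n! · ∑_{t_1 + 2t_2 + ⋯ + n t_n = n} ( (t_1+⋯+t_n)! / (t_1! ⋯ t_n!) ) · (−1)^{t_1+⋯+t_n} · (N!/(N+1)!)^{t_1} (N!/(N+2)!)^{t_2} ⋯ (N!/(N+n)!)^{t_n}, where the sum is over all n-tuples (t_1,…,t_n) of nonnegative integers with t_1 + 2t_2 + ⋯ + n t_n = n. -/

import Mathlib

/-!
Write `G = 1 - u` with `X ∣ u`. Modulo `X ^ (n + 1)`, `G⁻¹` is the truncated geometric series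
`∑_{k ≤ n} u ^ k`, and `u` may be replaced by the polynomial `-∑_{j=1}^{n} a_j X^j`, where
`a_j` are the coefficients of `G`. By the multinomial theorem, the coefficient of `X ^ n` in
`u ^ k` collects the tuples `(t_j)` with `∑ t_j = k` and `∑ j t_j = n`, each with weight
`multinomial(t) ∏ (-a_j) ^ t_j`; summing over `k ≤ n` gives every tuple of weight `n` once.
-/

/-- The power series ∑_{i≥0} (N!/(N+i)!) xⁱ over ℚ. -/
noncomputable def hgSeries (N : ℕ) : PowerSeries ℚ :=
  PowerSeries.mk fun i => (N.factorial : ℚ) / ((N + i).factorial : ℚ)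

/-- The hypergeometric Bernoulli number `B_{N,n}`, defined so that
`∑ (B_{N,n}/n!) xⁿ` is the multiplicative inverse of `hgSeries N` in ℚ[[x]]. -/
noncomputable def hB (N n : ℕ) : ℚ :=
  (n.factorial : ℚ) * PowerSeries.coeff n (hgSeries N)⁻¹

open PowerSeries Finset

theorem Nat.cast_multinomial {α K : Type*} [Semifield K] [CharZero K] (s : Finset α)
    (f : α → ℕ) :
    (Nat.multinomial s f : K) = (∑ i ∈ s, f i).factorial / ∏ i ∈ s, ((f i).factorial : K) := by
  rw [Nat.multinomial, Nat.cast_div (prod_factorial_dvd_factorial_sum s f)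
    (Nat.cast_ne_zero.2 (by positivity)), Nat.cast_prod]

theorem sum_le_sum_succ_mul {n : ℕ} (t : Fin n → ℕ) :
    ∑ j, t j ≤ ∑ j : Fin n, ((j : ℕ) + 1) * t j :=
  sum_le_sum fun j _ => Nat.le_mul_of_pos_left _ j.val.succ_pos

theorem sum_range_sum_piAntidiag_weight_eq {M : Type*} [AddCommMonoid M] (n : ℕ)
    (f : (Fin n → ℕ) → M) :
    ∑ k ∈ range (n + 1), ∑ t ∈ (piAntidiag univ k).filter
        (fun t => ∑ j : Fin n, ((j : ℕ) + 1) * t j = n), f t =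
      ∑ t ∈ univ.filter (fun t : Fin n → Fin (n + 1) => ∑ j : Fin n, ((j : ℕ) + 1) * (t j : ℕ) = n),
        f (fun j => t j) := by
  rw [sum_sigma']
  refine sum_bij' (fun p hp j => ⟨p.2 j, ?_⟩) (fun t _ => ⟨∑ j, (t j : ℕ), fun j => t j⟩)
    ?_ ?_ ?_ ?_ ?_
  · simp only [mem_sigma, mem_range, mem_filter, mem_piAntidiag] at hp
    have := (single_le_sum (fun i _ => Nat.zero_le (p.2 i)) (mem_univ j)).trans
      (sum_le_sum_succ_mul p.2)
    omega
  · intro p hp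
    simp only [mem_sigma, mem_filter, mem_piAntidiag] at hp
    simpa using hp.2.2
  · intro t ht
    simp only [mem_filter, mem_univ, true_and] at ht
    have := sum_le_sum_succ_mul (fun j => (t j : ℕ))
    simp only [mem_sigma, mem_range, mem_filter, mem_piAntidiag, mem_univ, implies_true, ht,
      and_true]
    omega
  · intro p hp
    simp only [mem_sigma, mem_filter, mem_piAntidiag] at hp
    exact Sigma.ext hp.2.1.1 HEq.rfl
  · intro t _
    rfl
  · intro p _
    rfl

namespace PowerSeries

theorem coeff_inv_eq_sum_coeff_pow {K : Type*} [Field K] {G P : K⟦X⟧} {n : ℕ}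
    (hP : X ∣ P) (hGP : X ^ (n + 1) ∣ 1 - G - P) :
    coeff n G⁻¹ = ∑ k ∈ range (n + 1), coeff n (P ^ k) := by
  have hG : constantCoeff G = 1 := by
    have := X_dvd_iff.1 ((dvd_pow_self X n.succ_ne_zero).trans hGP)
    rw [map_sub, map_sub, map_one, X_dvd_iff.1 hP] at this
    linear_combination -this
  set S := ∑ k ∈ range (n + 1), P ^ k
  have hdiff : G⁻¹ - S = G⁻¹ * (P ^ (n + 1) + (1 - G - P) * S) := by
    linear_combination (-G⁻¹) * mul_neg_geom_sum P (n + 1) +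
      S * PowerSeries.inv_mul_cancel G (by simp [hG])
  have hdvd : X ^ (n + 1) ∣ G⁻¹ - S :=
    hdiff ▸ ((pow_dvd_pow_of_dvd hP _).add (hGP.mul_right S)).mul_left _
  rw [← map_sum, ← sub_eq_zero, ← map_sub]
  exact X_pow_dvd_iff.1 hdvd n n.lt_succ_self

theorem X_pow_succ_dvd_one_sub_sub_sum {R : Type*} [CommRing R] {G : R⟦X⟧}
    (hG : constantCoeff G = 1) (n : ℕ) :
    X ^ (n + 1) ∣ 1 - G - ∑ j : Fin n, C (-coeff (j + 1) G) * X ^ ((j : ℕ) + 1) := by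
  rw [X_pow_dvd_iff]
  intro m hm
  simp only [map_sub, map_sum, coeff_C_mul_X_pow, Fin.sum_univ_eq_sum_range
    (fun j => if m = j + 1 then -coeff (j + 1) G else 0)]
  rcases m with _ | M
  · simp [hG]
  · rw [Nat.lt_succ_iff, Nat.succ_le_iff, ← mem_range] at hm
    simp only [Nat.add_right_cancel_iff, sum_ite_eq, if_pos hm, coeff_one, Nat.succ_ne_zero,
      if_false]
    ring

theorem coeff_sum_C_mul_X_pow_pow {R ι : Type*} [CommSemiring R] [Fintype ι] [DecidableEq ι]
    (c : ι → R) (w : ι → ℕ) (k n : ℕ) :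
    coeff n ((∑ i, C (c i) * X ^ w i) ^ k) =
      ∑ t ∈ (piAntidiag univ k).filter (fun t => ∑ i, w i * t i = n),
        (Nat.multinomial univ t : R) * ∏ i, c i ^ t i := by
  rw [sum_pow_eq_sum_piAntidiag, map_sum, sum_filter]
  refine sum_congr rfl fun t _ => ?_
  simp only [mul_pow, ← map_pow, ← pow_mul, prod_mul_distrib, ← map_prod, prod_pow_eq_pow_sum,
    ← map_natCast (C (R := R)), ← mul_assoc, ← map_mul, coeff_C_mul_X_pow]
  exact if_congr eq_comm rfl rfl

theorem coeff_inv_eq_sum_multinomial_mul_prod {K : Type*} [Field K] {G : K⟦X⟧}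
    (hG : constantCoeff G = 1) (n : ℕ) :
    coeff n G⁻¹ =
      ∑ t ∈ univ.filter (fun t : Fin n → Fin (n + 1) => ∑ j : Fin n, ((j : ℕ) + 1) * (t j : ℕ) = n),
        (Nat.multinomial univ (fun j => (t j : ℕ)) : K) *
          ∏ j : Fin n, (-coeff ((j : ℕ) + 1) G) ^ (t j : ℕ) := by
  have hX : X ∣ ∑ j : Fin n, C (-coeff (j + 1) G) * X ^ ((j : ℕ) + 1) :=
    dvd_sum fun j _ => (dvd_pow_self X j.val.succ_ne_zero).mul_left _
  rw [coeff_inv_eq_sum_coeff_pow hX (X_pow_succ_dvd_one_sub_sub_sum hG n)]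
  simp only [coeff_sum_C_mul_X_pow_pow]
  exact sum_range_sum_piAntidiag_weight_eq n _

end PowerSeries

theorem constantCoeff_hgSeries (N : ℕ) : constantCoeff (hgSeries N) = 1 := by
  simp [hgSeries, ← coeff_zero_eq_constantCoeff_apply, Nat.factorial_ne_zero]

theorem coeff_hgSeries (N i : ℕ) :
    coeff i (hgSeries N) = (N.factorial : ℚ) / ((N + i).factorial : ℚ) :=
  coeff_mk _ _

theorem stmt16_general (N n : ℕ) :
    hB N n = (n.factorial : ℚ) *
      ∑ t ∈ Finset.univ.filter (fun t : Fin n → Fin (n + 1) =>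
          ∑ j : Fin n, ((j : ℕ) + 1) * (t j : ℕ) = n),
        ((∑ j : Fin n, (t j : ℕ)).factorial : ℚ) / (∏ j : Fin n, ((t j : ℕ).factorial : ℚ)) *
          (-1 : ℚ) ^ (∑ j : Fin n, (t j : ℕ)) *
          ∏ j : Fin n,
            ((N.factorial : ℚ) / ((N + (j : ℕ) + 1).factorial : ℚ)) ^ (t j : ℕ) := by
  rw [hB, coeff_inv_eq_sum_multinomial_mul_prod (constantCoeff_hgSeries N)]
  congr 1
  refine sum_congr rfl fun t _ => ?_
  simp only [neg_pow (coeff _ (hgSeries N)), prod_mul_distrib, prod_pow_eq_pow_sum]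
  rw [Nat.cast_multinomial]
  simp only [coeff_hgSeries, add_assoc]
  ring

/-- Trudi-type expression for `B_{N,n}`.  An n-tuple `(t₁,…,t_n)` with
`t₁ + 2t₂ + ⋯ + n·t_n = n` is encoded as `t : Fin n → Fin (n+1)` (each `t_j ≤ n`
automatically since `j·t_j ≤ n`), with `t j` the multiplicity of `j+1`. -/
theorem stmt16 (N n : ℕ) (hN : 1 ≤ N) (hn : 1 ≤ n) :
    hB N n = (n.factorial : ℚ) *
      ∑ t ∈ Finset.univ.filter (fun t : Fin n → Fin (n + 1) =>
          ∑ j : Fin n, ((j : ℕ) + 1) * (t j : ℕ) = n),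
        ((∑ j : Fin n, (t j : ℕ)).factorial : ℚ) / (∏ j : Fin n, ((t j : ℕ).factorial : ℚ)) *
          (-1 : ℚ) ^ (∑ j : Fin n, (t j : ℕ)) *
          ∏ j : Fin n,
            ((N.factorial : ℚ) / ((N + (j : ℕ) + 1).factorial : ℚ)) ^ (t j : ℕ) :=
  stmt16_general N n
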